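/- arXiv:2406.01509 — 3 statements merged into one kernel-verified Lean document; each statement's English description precedes it below -/
import Mathlib

section
/- Every real number of the form λ = −m⁴ with m > 0 satisfying sin(m) = 0 is an eigenvalue of u ↦ u'''' on [0,1] in the space X_{{0,1}}^{{0,3}}; that is, if sin(m)=0 and m>0 then there exists a nonzero u ∈ C⁴([0,1]) with u'''' = m⁴ u, u(0)=u'(0)=0, u(1)=u'''(1)=0. In particular −π⁴ is such an eigenvalue. -/
open Real

noncomputable def FF (c1 c2 c3 c4 m t : ℝ) : ℝ :=
  c1 * Real.sin (m * t) + c2 * Real.cos (m * t) + c3 * Real.sinh (m * t) + c4 * Real.cosh (m * t)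

lemma FF_hasDerivAt (c1 c2 c3 c4 m t : ℝ) :
    HasDerivAt (FF c1 c2 c3 c4 m)
      (FF (-(m * c2)) (m * c1) (m * c4) (m * c3) m t) t := by
  have h : HasDerivAt (fun t : ℝ => m * t) m t := by
    simpa using (hasDerivAt_id t).const_mul m
  have := (((h.sin.const_mul c1).add (h.cos.const_mul c2)).add (h.sinh.const_mul c3)).add
    (h.cosh.const_mul c4)
  convert this using 1
  · rfl
  · rfl
  · ext x; simp [FF]
  simp [FF]
  ring

lemma FF_deriv (c1 c2 c3 c4 m : ℝ) :
    deriv (FF c1 c2 c3 c4 m) = FF (-(m * c2)) (m * c1) (m * c4) (m * c3) m := by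
  funext t
  exact (FF_hasDerivAt c1 c2 c3 c4 m t).deriv

lemma FF_contDiff (c1 c2 c3 c4 m : ℝ) : ContDiff ℝ (⊤ : ℕ∞) (FF c1 c2 c3 c4 m) := by
  unfold FF
  have h : ContDiff ℝ (⊤ : ℕ∞) (fun t : ℝ => m * t) := contDiff_const.mul contDiff_id
  exact (((contDiff_const.mul (Real.contDiff_sin.comp h)).add
    (contDiff_const.mul (Real.contDiff_cos.comp h))).add
    (contDiff_const.mul (Real.contDiff_sinh.comp h))).add
    (contDiff_const.mul (Real.contDiff_cosh.comp h))

/-- Every `λ = -m⁴` with `m > 0` and `sin m = 0` is an eigenvalue of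
`u ↦ u''''` on `[0,1]` in `X_{{0,1}}^{{0,3}}`: there is a nonzero `u ∈ C⁴` with
`u'''' = m⁴ u`, `u(0) = u'(0) = 0`, `u(1) = u'''(1) = 0`.  In particular (taking
`m = π`, since `sin π = 0` and `π > 0`) `-π⁴` is such an eigenvalue. -/
theorem stmt7 :
    (∀ m : ℝ, 0 < m → Real.sin m = 0 →
      ∃ u : ℝ → ℝ, ContDiff ℝ (⊤ : ℕ∞) u ∧ (∃ t ∈ Set.Icc (0 : ℝ) 1, u t ≠ 0) ∧
        (∀ t, iteratedDeriv 4 u t = m ^ 4 * u t) ∧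
        u 0 = 0 ∧ deriv u 0 = 0 ∧ u 1 = 0 ∧ iteratedDeriv 3 u 1 = 0) ∧
    (∃ u : ℝ → ℝ, ContDiff ℝ (⊤ : ℕ∞) u ∧ (∃ t ∈ Set.Icc (0 : ℝ) 1, u t ≠ 0) ∧
      (∀ t, iteratedDeriv 4 u t = Real.pi ^ 4 * u t) ∧
      u 0 = 0 ∧ deriv u 0 = 0 ∧ u 1 = 0 ∧ iteratedDeriv 3 u 1 = 0) := by
  have main : ∀ m : ℝ, 0 < m → Real.sin m = 0 →
      ∃ u : ℝ → ℝ, ContDiff ℝ (⊤ : ℕ∞) u ∧ (∃ t ∈ Set.Icc (0 : ℝ) 1, u t ≠ 0) ∧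
        (∀ t, iteratedDeriv 4 u t = m ^ 4 * u t) ∧
        u 0 = 0 ∧ deriv u 0 = 0 ∧ u 1 = 0 ∧ iteratedDeriv 3 u 1 = 0 := by
    intro m hm hs
    set A : ℝ := Real.sinh m with hA
    set E : ℝ := Real.cos m + Real.cosh m with hE
    refine ⟨FF A (-E) (-A) E m, FF_contDiff _ _ _ _ _, ?_, ?_, ?_, ?_, ?_, ?_⟩
    · -- nonzero on [0,1]
      by_contra hzero
      push_neg at hzero
      have hder2 : deriv (deriv (FF A (-E) (-A) E m)) =
          FF (-(m * (m * A))) (m * (m * E)) (-(m * (m * A))) (m * (m * E)) m := by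
        rw [FF_deriv, FF_deriv]; ring_nf
      have h1 : ∀ t ∈ Set.Ioo (0 : ℝ) 1, deriv (FF A (-E) (-A) E m) t = 0 := by
        intro t ht
        have heq : FF A (-E) (-A) E m =ᶠ[nhds t] (fun _ => (0 : ℝ)) :=
          Filter.eventuallyEq_of_mem (isOpen_Ioo.mem_nhds ht)
            (fun x hx => hzero x (Set.Ioo_subset_Icc_self hx))
        rw [heq.deriv_eq]; simp
      have h2 : ∀ t ∈ Set.Ioo (0 : ℝ) 1, deriv (deriv (FF A (-E) (-A) E m)) t = 0 := by
        intro t ht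
        have heq : deriv (FF A (-E) (-A) E m) =ᶠ[nhds t] (fun _ => (0 : ℝ)) :=
          Filter.eventuallyEq_of_mem (isOpen_Ioo.mem_nhds ht) (fun x hx => h1 x hx)
        rw [heq.deriv_eq]; simp
      have hcont : Continuous (deriv (deriv (FF A (-E) (-A) E m))) := by
        rw [hder2]; exact (FF_contDiff _ _ _ _ _).continuous
      have hclos : Set.EqOn (deriv (deriv (FF A (-E) (-A) E m))) (fun _ => (0 : ℝ))
          (closure (Set.Ioo (0 : ℝ) 1)) :=
        Set.EqOn.closure h2 hcont continuous_const
      have h0 : deriv (deriv (FF A (-E) (-A) E m)) 0 = 0 := by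
        apply hclos
        rw [closure_Ioo (by norm_num : (0 : ℝ) ≠ 1)]
        exact Set.left_mem_Icc.2 (by norm_num)
      rw [hder2] at h0
      simp [FF] at h0
      -- h0 : m * (m * E) + m * (m * E) + (-(m * (m * A)) * ? ...) evaluate
      have hcosh : 1 < Real.cosh m := (Real.one_lt_cosh).2 (ne_of_gt hm)
      have hcos : -1 ≤ Real.cos m := Real.neg_one_le_cos m
      have hEpos : 0 < E := by rw [hE]; linarith
      rcases h0 with h | h
      · linarith
      · linarith
    · -- eigen equation
      intro t
      rw [show (4 : ℕ) = 3 + 1 from rfl, iteratedDeriv_succ,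
        show (3 : ℕ) = 2 + 1 from rfl, iteratedDeriv_succ,
        show (2 : ℕ) = 1 + 1 from rfl, iteratedDeriv_succ, iteratedDeriv_one,
        FF_deriv, FF_deriv, FF_deriv, FF_deriv]
      simp only [FF]
      ring
    · simp [FF]
    · rw [FF_deriv]; simp [FF]
    · have h1 : Real.cosh m ^ 2 - Real.sinh m ^ 2 = 1 := Real.cosh_sq_sub_sinh_sq m
      have h2 : Real.sin m ^ 2 + Real.cos m ^ 2 = 1 := Real.sin_sq_add_cos_sq m
      simp only [FF, mul_one, hs, hA, hE]
      nlinarith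
    · rw [show (3 : ℕ) = 2 + 1 from rfl, iteratedDeriv_succ,
        show (2 : ℕ) = 1 + 1 from rfl, iteratedDeriv_succ, iteratedDeriv_one,
        FF_deriv, FF_deriv, FF_deriv]
      simp only [FF, mul_one, hs, hA, hE]
      ring
  exact ⟨main, main Real.pi Real.pi_pos Real.sin_pi⟩
end

section
/- With g the Green's function of u'''' on [0,1] with boundary conditions u(0)=u'(0)=u'(1)=u'''(1)=0, the partial derivative ∂g/∂t, given by ∂g/∂t(t,s) = (1/2)s²(1−t) for 0 ≤ s ≤ t ≤ 1 and (1/2)t(s(2−s)−t) for 0 ≤ t < s ≤ 1, satisfies the two-sided bounds φ(s)k₁¹(t) ≤ ∂g/∂t(t,s) ≤ φ(s)k₂¹(t) for all (t,s) ∈ [0,1]², where φ(s) = s², k₁¹(t) = (1/2)t(1−t), and k₂¹(t) = (1/2)(1−t). In particular ∂g/∂t ≥ 0 on [0,1]². -/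
/-- The Green's function of `u ↦ u''''` on `[0,1]` with boundary conditions
`u(0) = u'(0) = u'(1) = u'''(1) = 0`. -/
noncomputable def greenG (t s : ℝ) : ℝ :=
  if s ≤ t then -(1/12) * s^2 * (2*s + 3*(t - 2)*t)
  else (1/12) * t^2 * (-3*(s - 2)*s - 2*t)

/-- The first `t`-partial derivative of `greenG`. -/
noncomputable def greenG1 (t s : ℝ) : ℝ :=
  if s ≤ t then (1/2) * s^2 * (1 - t)
  else (1/2) * t * (s*(2 - s) - t)

/-! Away from the diagonal `greenG · s` is a cubic polynomial, so `greenG1` is its derivative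
there. Both bounds reduce to factorised gaps: on `s ≤ t` the upper bound is an equality and the
lower gap is `s² (1 - t)² / 2`; on `t < s` the upper gap is `(s - t)² / 2` and the lower gap is
`t (1 - s) ((s - t) + s (1 - t)) / 2`. -/

theorem hasDerivAt_greenG_of_gt {t s : ℝ} (h : s < t) :
    HasDerivAt (greenG · s) (greenG1 t s) t := by
  have hpoly : HasDerivAt (fun x => -(1/12) * s^2 * (2*s + 3*(x - 2)*x)) (greenG1 t s) t := by
    rw [greenG1, if_pos h.le]
    exact ((((hasDerivAt_id' t).sub_const 2).const_mul 3).mul (hasDerivAt_id' t)).const_add (2*s)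
      |>.const_mul (-(1/12) * s^2) |>.congr_deriv (by ring)
  refine hpoly.congr_of_eventuallyEq ?_
  filter_upwards [Ioi_mem_nhds h] with x hx
  rw [greenG, if_pos hx.le]

theorem hasDerivAt_greenG_of_lt {t s : ℝ} (h : t < s) :
    HasDerivAt (greenG · s) (greenG1 t s) t := by
  have hpoly : HasDerivAt (fun x => (1/12) * x^2 * (-3*(s - 2)*s - 2*x)) (greenG1 t s) t := by
    rw [greenG1, if_neg h.not_ge]
    exact ((hasDerivAt_pow 2 t).const_mul (1/12)).mul
      (((hasDerivAt_id' t).const_mul 2).const_sub (-3*(s - 2)*s))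
      |>.congr_deriv (by push_cast; ring)
  refine hpoly.congr_of_eventuallyEq ?_
  filter_upwards [Iio_mem_nhds h] with x hx
  rw [greenG, if_neg (not_le.mpr hx)]

theorem hasDerivAt_greenG {t s : ℝ} (h : t ≠ s) :
    HasDerivAt (greenG · s) (greenG1 t s) t :=
  h.lt_or_gt.elim hasDerivAt_greenG_of_lt hasDerivAt_greenG_of_gt

theorem greenG1_le (t s : ℝ) : greenG1 t s ≤ s^2 * (1/2 * (1 - t)) := by
  unfold greenG1
  split_ifs
  · linarith
  · nlinarith [sq_nonneg (s - t)]

theorem le_greenG1 {t s : ℝ} (ht : 0 ≤ t) (hs : s ≤ 1) :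
    s^2 * (1/2 * t * (1 - t)) ≤ greenG1 t s := by
  unfold greenG1
  split_ifs with h
  · nlinarith [mul_nonneg (sq_nonneg s) (sq_nonneg (1 - t))]
  · push Not at h
    have hgap : 0 ≤ t * (1 - s) * ((s - t) + s * (1 - t)) := by
      have : 0 ≤ s * (1 - t) := mul_nonneg (by linarith) (by linarith)
      positivity
    nlinarith [hgap]

/-- The partial derivative `∂g/∂t`, given by the piecewise formula
`greenG1`, satisfies `φ(s)k₁¹(t) ≤ ∂g/∂t(t,s) ≤ φ(s)k₂¹(t)` on `[0,1]²` with
`φ(s) = s²`, `k₁¹(t) = (1/2)t(1-t)`, `k₂¹(t) = (1/2)(1-t)`; in particular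
`∂g/∂t ≥ 0` on `[0,1]²`. -/
theorem stmt11 :
    (∀ t s : ℝ, t ≠ s → deriv (fun t => greenG t s) t = greenG1 t s) ∧
    (∀ t ∈ Set.Icc (0 : ℝ) 1, ∀ s ∈ Set.Icc (0 : ℝ) 1,
      s^2 * (1/2 * t * (1 - t)) ≤ greenG1 t s ∧
      greenG1 t s ≤ s^2 * (1/2 * (1 - t)) ∧
      0 ≤ greenG1 t s) := by
  refine ⟨fun t s h => (hasDerivAt_greenG h).deriv, ?_⟩
  rintro t ⟨ht0, ht1⟩ s ⟨-, hs1⟩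
  have hlower := le_greenG1 ht0 hs1
  have hweight : 0 ≤ s^2 * (1/2 * t * (1 - t)) :=
    mul_nonneg (sq_nonneg s) (mul_nonneg (by positivity) (sub_nonneg.mpr ht1))
  exact ⟨hlower, greenG1_le t s, hweight.trans hlower⟩
end

section
/- Let g be the Green's function of u'''' on [0,1] with boundary conditions u(0)=u'(0)=u'(1)=u'''(1)=0, and let f: [0,1]×ℝ⁴ → [0,∞) be continuous. Define (Lu)(t) = ∫₀¹ g(t,s) f(s,u(s),u'(s),u''(s),u'''(s)) ds for u ∈ C³([0,1]). Then for every u ∈ C³([0,1]): (Lu)(t) ≥ 0 for all t, and (Lu)(t) ≥ (k₁(t)/k₂)·‖Lu‖_∞ for all t ∈ [0,1], where k₁(t) = (t²/12)(3−2t) and k₂ = 1/4. -/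
lemma greenG_cont (t : ℝ) : Continuous fun s => greenG t s := by
  unfold greenG
  apply Continuous.if_le (by continuity) (by continuity) continuous_id continuous_const
  intro s hs
  simp only [id] at hs
  rw [hs]; ring

lemma greenG_lb {t s : ℝ} (ht : t ∈ Set.Icc (0:ℝ) 1) (hs : s ∈ Set.Icc (0:ℝ) 1) :
    s^2 * (t^2 / 12 * (3 - 2*t)) ≤ greenG t s := by
  obtain ⟨ht0, ht1⟩ := ht; obtain ⟨hs0, hs1⟩ := hs
  unfold greenG; split_ifs with h
  · nlinarith [sq_nonneg s, mul_nonneg (mul_nonneg ht0 (sub_nonneg.2 ht1)) (sq_nonneg s),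
      mul_nonneg (mul_nonneg (sq_nonneg s) ht0) (mul_nonneg (sub_nonneg.2 ht1) (sub_nonneg.2 (by linarith : t ≤ 2)))]
  · push_neg at h
    nlinarith [sq_nonneg t, mul_nonneg (mul_nonneg (sq_nonneg t) (sub_nonneg.2 hs1)) (sub_nonneg.2 h.le),
      mul_nonneg (mul_nonneg (mul_nonneg (sq_nonneg t) (sub_nonneg.2 hs1)) hs0) (sub_nonneg.2 h.le)]

lemma greenG_ub {t s : ℝ} (ht : t ∈ Set.Icc (0:ℝ) 1) (hs : s ∈ Set.Icc (0:ℝ) 1) :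
    greenG t s ≤ s^2 * (1/4) := by
  obtain ⟨ht0, ht1⟩ := ht; obtain ⟨hs0, hs1⟩ := hs
  unfold greenG; split_ifs with h
  · nlinarith [sq_nonneg s, sq_nonneg (1 - t), mul_nonneg (sq_nonneg s) hs0,
      mul_nonneg (sq_nonneg s) (sq_nonneg (1 - t))]
  · push_neg at h
    nlinarith [sq_nonneg t, mul_nonneg (sq_nonneg t) ht0, sq_nonneg (1 - s),
      mul_nonneg (mul_nonneg (sub_nonneg.2 h.le) (add_nonneg hs0 ht0)) (by nlinarith : (0:ℝ) ≤ 6*s - 3*s^2 - 2*t),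
      mul_nonneg (sq_nonneg t) (sq_nonneg (1 - s))]

/-- For continuous nonnegative `f` and `u ∈ C³`, the function
`Lu(t) = ∫₀¹ g(t,s) f(s,u(s),u'(s),u''(s),u'''(s)) ds` satisfies `Lu ≥ 0` on `[0,1]`
and `Lu(t) ≥ (k₁(t)/k₂)·‖Lu‖_∞` with `k₁(t) = (t²/12)(3-2t)` and `k₂ = 1/4`. -/
theorem stmt18 (f : ℝ → ℝ → ℝ → ℝ → ℝ → ℝ)
    (hf : Continuous fun p : ℝ × ℝ × ℝ × ℝ × ℝ =>
      f p.1 p.2.1 p.2.2.1 p.2.2.2.1 p.2.2.2.2)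
    (hfnonneg : ∀ t x1 x2 x3 x4, 0 ≤ f t x1 x2 x3 x4)
    (u : ℝ → ℝ) (hu : ContDiff ℝ 3 u) :
    ∀ t ∈ Set.Icc (0 : ℝ) 1,
      (0 ≤ ∫ s in (0 : ℝ)..1,
        greenG t s * f s (u s) (deriv u s) (iteratedDeriv 2 u s) (iteratedDeriv 3 u s)) ∧
      (t^2 / 12 * (3 - 2*t)) / (1/4) *
        sSup ((fun t' : ℝ => ∫ s in (0 : ℝ)..1,
          greenG t' s * f s (u s) (deriv u s) (iteratedDeriv 2 u s)
            (iteratedDeriv 3 u s)) '' Set.Icc 0 1)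
        ≤ ∫ s in (0 : ℝ)..1,
            greenG t s * f s (u s) (deriv u s) (iteratedDeriv 2 u s)
              (iteratedDeriv 3 u s) := by
  set F : ℝ → ℝ := fun s =>
    f s (u s) (deriv u s) (iteratedDeriv 2 u s) (iteratedDeriv 3 u s) with hFdef
  have hFc : Continuous F := by
    rw [hFdef]
    have hc : Continuous fun s : ℝ =>
        (s, u s, deriv u s, iteratedDeriv 2 u s, iteratedDeriv 3 u s) :=
      continuous_id.prodMk (hu.continuous.prodMk
        (((hu.continuous_deriv (by norm_num)).prodMk
          ((hu.continuous_iteratedDeriv 2 (by norm_num)).prodMk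
            (hu.continuous_iteratedDeriv 3 (by norm_num))))))
    exact hf.comp hc
  have hFnn : ∀ s, 0 ≤ F s := fun s => hfnonneg _ _ _ _ _
  set Lu : ℝ → ℝ := fun t => ∫ s in (0:ℝ)..1, greenG t s * F s with hLu
  have hInt : ∀ t, IntervalIntegrable (fun s => greenG t s * F s)
      MeasureTheory.volume 0 1 := fun t => ((greenG_cont t).mul hFc).intervalIntegrable 0 1
  have hIntSq : IntervalIntegrable (fun s => s^2 * F s) MeasureTheory.volume 0 1 :=
    ((continuous_pow 2).mul hFc).intervalIntegrable 0 1
  set I : ℝ := ∫ s in (0:ℝ)..1, s^2 * F s with hI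
  -- lower bound
  have hlb : ∀ t ∈ Set.Icc (0:ℝ) 1, (t^2 / 12 * (3 - 2*t)) * I ≤ Lu t := by
    intro t ht
    have : (∫ s in (0:ℝ)..1, (t^2 / 12 * (3 - 2*t)) * (s^2 * F s)) ≤ Lu t := by
      apply intervalIntegral.integral_mono_on (by norm_num)
        (hIntSq.const_mul _) (hInt t)
      intro s hs
      calc (t^2 / 12 * (3 - 2*t)) * (s^2 * F s)
          = (s^2 * (t^2 / 12 * (3 - 2*t))) * F s := by ring
        _ ≤ greenG t s * F s :=
            mul_le_mul_of_nonneg_right (greenG_lb ht hs) (hFnn s)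
    rwa [intervalIntegral.integral_const_mul] at this
  -- upper bound
  have hub : ∀ t ∈ Set.Icc (0:ℝ) 1, Lu t ≤ (1/4) * I := by
    intro t ht
    have : Lu t ≤ ∫ s in (0:ℝ)..1, (1/4) * (s^2 * F s) := by
      apply intervalIntegral.integral_mono_on (by norm_num) (hInt t)
        (hIntSq.const_mul _)
      intro s hs
      calc greenG t s * F s ≤ (s^2 * (1/4)) * F s :=
            mul_le_mul_of_nonneg_right (greenG_ub ht hs) (hFnn s)
        _ = (1/4) * (s^2 * F s) := by ring
    rwa [intervalIntegral.integral_const_mul] at this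
  intro t ht
  have hk : 0 ≤ t^2 / 12 * (3 - 2*t) := by
    obtain ⟨_, ht1⟩ := ht
    have := sq_nonneg t
    nlinarith
  have h0I : 0 ≤ I := by
    have := hlb 0 (by norm_num)
    have h0 : (0:ℝ)^2 / 12 * (3 - 2*0) * I = 0 := by ring
    -- just prove 0 ≤ I directly
    apply intervalIntegral.integral_nonneg (by norm_num)
    intro s hs
    exact mul_nonneg (sq_nonneg s) (hFnn s)
  have hLunn : 0 ≤ Lu t :=
    le_trans (mul_nonneg hk h0I) (hlb t ht)
  refine ⟨hLunn, ?_⟩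
  have hsup : sSup ((fun t' : ℝ => Lu t') '' Set.Icc 0 1) ≤ (1/4) * I := by
    apply csSup_le ((Set.nonempty_Icc.2 (by norm_num)).image _)
    rintro x ⟨t', ht', rfl⟩
    exact hub t' ht'
  calc (t^2 / 12 * (3 - 2*t)) / (1/4) * sSup ((fun t' : ℝ => Lu t') '' Set.Icc 0 1)
      ≤ (t^2 / 12 * (3 - 2*t)) / (1/4) * ((1/4) * I) :=
        mul_le_mul_of_nonneg_left hsup (div_nonneg hk (by norm_num))
    _ = (t^2 / 12 * (3 - 2*t)) * I := by ring
    _ ≤ Lu t := hlb t ht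
end
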